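/- arXiv:2308.02938 — 4 statements merged into one kernel-verified Lean document; each statement's English description precedes it below -/
import Mathlib

section
/- Every closed walk in H(d,2) based at the all-zeros vertex is ×-homotopic rel endpoints to a closed walk lying entirely in the subgraph of vertices whose last coordinate is 0 (which is isomorphic to H(d-1,2)). -/
/-- The Hamming graph `H(d,q)`: vertices are functions `Fin d → Fin q`,
adjacent iff they differ in exactly one coordinate. -/
def hammingGraph (d q : ℕ) : SimpleGraph (Fin d → Fin q) where
  Adj v w := ∃! i, v i ≠ w i
  symm := by
    constructor
    rintro v w ⟨i, hi, hu⟩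
    exact ⟨i, hi.symm, fun j hj => hu j hj.symm⟩
  loopless := by
    constructor
    rintro v ⟨i, hi, -⟩
    exact hi rfl

/-- `l` is (the list of vertices of) a walk in `G` from `a` to `b`. -/
def IsWalkOn {V : Type*} (G : SimpleGraph V) (a b : V) (l : List V) : Prop :=
  l.Chain' G.Adj ∧ l.head? = some a ∧ l.getLast? = some b

/-- Elementary moves on walks: prunes (and their inverses, anti-prunes,
via symmetry) and spider moves. -/
inductive Move {V : Type*} (G : SimpleGraph V) : List V → List V → Prop
  | prune (xs ys : List V) (u v : V) (huv : G.Adj u v) :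
      Move G (xs ++ u :: v :: u :: ys) (xs ++ u :: ys)
  | spider (xs ys : List V) (u v v' w : V) (hne : v ≠ v')
      (h1 : G.Adj u v') (h2 : G.Adj v' w) :
      Move G (xs ++ u :: v :: w :: ys) (xs ++ u :: v' :: w :: ys)

/-- ×-homotopy rel endpoints: the equivalence relation generated by prunes,
anti-prunes and spider moves. -/
def Homotopic {V : Type*} (G : SimpleGraph V) : List V → List V → Prop :=
  Relation.EqvGen (Move G)

/-- Concatenation of walks sharing an endpoint. -/
def wcat {V : Type*} (l1 l2 : List V) : List V := l1 ++ l2.tail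

/-- Concatenation of a list of closed walks based at `z`. -/
def wprod {V : Type*} (z : V) (ws : List (List V)) : List V := ws.foldr wcat [z]

/-- `u` and `v` differ exactly in coordinate `i`. -/
def DiffAt {d q : ℕ} (u v : Fin d → Fin q) (i : Fin d) : Prop :=
  u i ≠ v i ∧ ∀ j, j ≠ i → u j = v j

/-- A ground walk in coordinate `i`: a closed 3-walk at the all-zeros vertex
whose intermediate vertices are nonzero only in coordinate `i`. -/
def IsGroundWalk (d q : ℕ) [NeZero q] (i : Fin d) (l : List (Fin d → Fin q)) : Prop :=
  ∃ a b : Fin q, a ≠ 0 ∧ b ≠ 0 ∧ a ≠ b ∧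
    l = [(0 : Fin d → Fin q), Function.update (0 : Fin d → Fin q) i a,
      Function.update (0 : Fin d → Fin q) i b, 0]

/-- Number of steps of a walk in which coordinate `i` changes. -/
def changeCount {d q : ℕ} (i : Fin d) : List (Fin d → Fin q) → ℕ
  | x :: y :: rest => (if x i = y i then 0 else 1) + changeCount i (y :: rest)
  | _ => 0

/-! Call a vertex bad when its last coordinate is `1` and look at the first bad vertex `v` of the
walk, entered from `u`. If the walk leaves `v` by flipping the last coordinate back, it returns to
`u` and the backtrack `u v u` is pruned; otherwise it leaves along another coordinate, and `v` can
be spidered to the fourth corner of the square spanned by the two steps, which is good. Either move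
lowers the number of bad vertices, so induction ends with a walk that avoids them. -/

section Walks

variable {V : Type*} {G : SimpleGraph V} {a b : V}

theorem List.exists_eq_append_cons_cons_of_not {α : Type*} (p : α → Prop) :
    ∀ (a : α) (t : List α), p a → (∃ x ∈ t, ¬ p x) →
      ∃ xs u v ys, a :: t = xs ++ u :: v :: ys ∧ p u ∧ ¬ p v
  | _, [], _, ⟨_, hx, _⟩ => by simp at hx
  | a, b :: t, ha, ⟨x, hx, hpx⟩ => by
    by_cases hb : p b
    · obtain ⟨xs, u, v, ys, heq, hu, hv⟩ :=
        List.exists_eq_append_cons_cons_of_not p b t hb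
          ⟨x, (List.mem_cons.mp hx).resolve_left (by rintro rfl; exact hpx hb), hpx⟩
      exact ⟨a :: xs, u, v, ys, by rw [heq]; rfl, hu, hv⟩
    · exact ⟨[], a, b, t, rfl, ha, hb⟩

theorem Move.isWalkOn {l l' : List V} (h : Move G l l') (hl : IsWalkOn G a b l) :
    IsWalkOn G a b l' := by
  obtain ⟨hc, hh, hla⟩ := hl
  cases h with
  | prune xs | spider xs =>
    exact ⟨by simp_all [List.Chain', List.isChain_append], by cases xs <;> simp_all,
      by simp_all [List.getLast?_append]⟩

def LocallyRetractable (G : SimpleGraph V) (p : V → Prop) : Prop :=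
  ∀ ⦃u v w⦄, p u → ¬ p v → G.Adj u v → G.Adj v w →
    w = u ∨ ∃ v', p v' ∧ G.Adj u v' ∧ G.Adj v' w

variable {p : V → Prop} [DecidablePred p]

theorem LocallyRetractable.exists_move_countP_lt (hG : LocallyRetractable G p) (ha : p a)
    (hb : p b) {l : List V} (hl : IsWalkOn G a b l) (hout : ∃ x ∈ l, ¬ p x) :
    ∃ l', Move G l l' ∧ l'.countP (fun x => ¬ p x) < l.countP (fun x => ¬ p x) := by
  obtain ⟨hc, hh, hla⟩ := hl
  obtain _ | ⟨c, t⟩ := l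
  · simp at hh
  obtain rfl : a = c := by simpa using hh.symm
  obtain ⟨xs, u, v, ys, hl, hu, hv⟩ := List.exists_eq_append_cons_cons_of_not p a t ha
    (by simpa [ha] using hout)
  rw [hl] at hc hla ⊢
  obtain _ | ⟨w, ys⟩ := ys
  · simp only [List.getLast?_append, List.getLast?_cons_cons, List.getLast?_singleton,
      Option.some_or, Option.some.injEq] at hla
    exact absurd (hla ▸ hb) hv
  have huv : G.Adj u v := by simp_all [List.Chain', List.isChain_append]
  have hvw : G.Adj v w := by simp_all [List.Chain', List.isChain_append]
  obtain hwu | ⟨v', hv', huv', hv'w⟩ := hG hu hv huv hvw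
  · subst w
    exact ⟨xs ++ u :: ys, Move.prune xs ys u v huv,
      by simp only [List.countP_append, List.countP_cons]; simp [hu, hv]⟩
  · exact ⟨xs ++ u :: v' :: w :: ys,
      Move.spider xs ys u v v' w (by rintro rfl; exact hv hv') huv' hv'w,
      by simp only [List.countP_append, List.countP_cons]; simp [hv, hv']⟩

theorem LocallyRetractable.exists_homotopic_forall (hG : LocallyRetractable G p) (ha : p a)
    (hb : p b) (l : List V) (hl : IsWalkOn G a b l) :
    ∃ l', Homotopic G l l' ∧ IsWalkOn G a b l' ∧ ∀ v ∈ l', p v := by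
  induction hn : l.countP (fun x => ¬ p x) using Nat.strong_induction_on generalizing l with
  | _ n ih =>
  by_cases hout : ∃ x ∈ l, ¬ p x
  · obtain ⟨l', hmove, hlt⟩ := hG.exists_move_countP_lt ha hb hl hout
    obtain ⟨l'', hhom, hl'', hin⟩ := ih _ (hn ▸ hlt) l' (hmove.isWalkOn hl) rfl
    exact ⟨l'', .trans _ _ _ (.rel _ _ hmove) hhom, hl'', hin⟩
  · push Not at hout
    exact ⟨l, .refl l, hl, hout⟩

end Walks

section Hamming

variable {d q : ℕ} {u v w : Fin d → Fin q} {i j : Fin d}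

theorem hammingGraph_adj_iff : (hammingGraph d q).Adj u v ↔ ∃ i, DiffAt u v i := by
  refine ⟨fun ⟨i, hi, huniq⟩ => ⟨i, hi, fun j hj => ?_⟩, fun ⟨i, hi, hrest⟩ => ⟨i, hi, ?_⟩⟩
  · by_contra h
    exact hj (huniq j h)
  · intro j hj
    by_contra h
    exact hj (hrest j h)

theorem DiffAt.eq_of_diffAt {u v w : Fin d → Fin 2} (huv : DiffAt u v i) (hvw : DiffAt v w i) :
    w = u := by
  funext k
  by_cases hk : k = i
  · subst hk
    have := huv.1
    have := hvw.1
    omega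
  · rw [← hvw.2 k hk, huv.2 k hk]

theorem DiffAt.square (huv : DiffAt u v i) (hvw : DiffAt v w j) (hij : i ≠ j) :
    DiffAt u (Function.update u j (w j)) j ∧ DiffAt (Function.update u j (w j)) w i := by
  refine ⟨⟨?_, fun k hk => ?_⟩, ⟨?_, fun k hk => ?_⟩⟩
  · simpa [huv.2 j hij.symm] using hvw.1
  · simp [hk]
  · simpa [Function.update_of_ne hij, ← hvw.2 i hij] using huv.1
  · by_cases hkj : k = j
    · subst hkj; simp
    · simp [Function.update_of_ne hkj, huv.2 k hk, hvw.2 k hkj]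

theorem hammingGraph_locallyRetractable (e : Fin d) :
    LocallyRetractable (hammingGraph d 2) (fun x => x e = 0) := by
  intro u v w (hu : u e = 0) (hv : v e ≠ 0) huv hvw
  obtain ⟨i, huv⟩ := hammingGraph_adj_iff.mp huv
  obtain ⟨j, hvw⟩ := hammingGraph_adj_iff.mp hvw
  obtain rfl : i = e := by
    by_contra hie
    exact hv (huv.2 e (Ne.symm hie) ▸ hu)
  by_cases hij : i = j
  · subst hij
    exact .inl (huv.eq_of_diffAt hvw)
  · obtain ⟨huv', hv'w⟩ := huv.square hvw hij
    exact .inr ⟨_, (Function.update_of_ne hij _ _).trans hu, hammingGraph_adj_iff.mpr ⟨_, huv'⟩,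
      hammingGraph_adj_iff.mpr ⟨_, hv'w⟩⟩

end Hamming

/-- every closed walk in `H(d,2)` based at the all-zeros vertex is
×-homotopic rel endpoints to a closed walk lying in the subgraph of vertices whose
last coordinate is `0`. -/
theorem stmt4 (d : ℕ) (hd : 0 < d) (l : List (Fin d → Fin 2))
    (hl : IsWalkOn (hammingGraph d 2) 0 0 l) :
    ∃ l', Homotopic (hammingGraph d 2) l l' ∧ IsWalkOn (hammingGraph d 2) 0 0 l' ∧
      ∀ v ∈ l', v ⟨d - 1, by omega⟩ = 0 :=
  (hammingGraph_locallyRetractable _).exists_homotopic_forall rfl rfl l hl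
end

section
/- In H(d,q) with q ≥ 4, any two closed ground walks in the same coordinate i are ×-homotopic rel endpoints: if U = (0, a, b, 0) and U' = (0, a', b', 0) are closed walks of length 3 from the zero vertex whose intermediate vertices are nonzero only in coordinate i, then U is equivalent to U'. -/
section Aux
variable {d q : ℕ} [NeZero q] {i : Fin d} {x y : Fin q}

private def fu (i : Fin d) (x : Fin q) : Fin d → Fin q :=
  Function.update (0 : Fin d → Fin q) i x

private lemma fu_inj (h : fu i x = fu i y) : x = y := by
  have := congrFun h i
  simpa [fu, Function.update] using this

private lemma adj_fu (hxy : x ≠ y) : (hammingGraph d q).Adj (fu i x) (fu i y) := by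
  refine ⟨i, by simpa [fu, Function.update] using hxy, fun j hj => ?_⟩
  by_contra hji
  apply hj
  simp [fu, Function.update_of_ne hji]

private lemma fu_zero : fu i (0 : Fin q) = 0 := by
  simp [fu]

private lemma adj_fu0 (hx : x ≠ 0) : (hammingGraph d q).Adj (fu i x) 0 := by
  have := adj_fu (i := i) (d := d) hx
  rwa [fu_zero] at this

private lemma adj_0fu (hx : x ≠ 0) : (hammingGraph d q).Adj 0 (fu i x) :=
  (adj_fu0 hx).symm

private lemma step2 (a b b' : Fin q) (hb' : b' ≠ 0) (hab' : a ≠ b') :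
    Homotopic (hammingGraph d q) [0, fu i a, fu i b, 0] [0, fu i a, fu i b', 0] := by
  by_cases hbb' : b = b'
  · subst hbb'; exact Relation.EqvGen.refl _
  · refine Relation.EqvGen.rel _ _ ?_
    have hm := Move.spider (G := hammingGraph d q) [0] [] (fu i a) (fu i b) (fu i b') 0
      (fun h => hbb' (fu_inj h)) (adj_fu hab') (adj_fu0 hb')
    simpa using hm

private lemma step1 (a a' b : Fin q) (ha' : a' ≠ 0) (ha'b : a' ≠ b) :
    Homotopic (hammingGraph d q) [0, fu i a, fu i b, 0] [0, fu i a', fu i b, 0] := by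
  by_cases haa' : a = a'
  · subst haa'; exact Relation.EqvGen.refl _
  · refine Relation.EqvGen.rel _ _ ?_
    have hm := Move.spider (G := hammingGraph d q) [] [0] 0 (fu i a) (fu i a') (fu i b)
      (fun h => haa' (fu_inj h)) (adj_0fu ha') (adj_fu ha'b)
    simpa using hm

end Aux

/-- in `H(d,q)` with `q ≥ 4`, any two ground walks in the same
coordinate `i` are ×-homotopic rel endpoints. -/
theorem stmt7 (d q : ℕ) [NeZero q] (hq : 4 ≤ q) (i : Fin d)
    (l l' : List (Fin d → Fin q))
    (h : IsGroundWalk d q i l) (h' : IsGroundWalk d q i l') :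
    Homotopic (hammingGraph d q) l l' := by
  obtain ⟨a, b, ha0, hb0, hab, rfl⟩ := h
  obtain ⟨a', b', ha'0, hb'0, ha'b', rfl⟩ := h'
  -- pick c outside {0, a, a'}
  have hcard : ({0, a, a'} : Finset (Fin q)).card ≤ 3 := by
    calc ({0, a, a'} : Finset (Fin q)).card
        ≤ ({a, a'} : Finset (Fin q)).card + 1 := Finset.card_insert_le _ _
      _ ≤ (({a'} : Finset (Fin q)).card + 1) + 1 := by
          exact Nat.add_le_add_right (Finset.card_insert_le _ _) 1
      _ ≤ 3 := by simp
  have hex : ∃ c : Fin q, c ∉ ({0, a, a'} : Finset (Fin q)) := by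
    by_contra hno
    push_neg at hno
    have : (Finset.univ : Finset (Fin q)) ⊆ ({0, a, a'} : Finset (Fin q)) :=
      fun c _ => hno c
    have hle := Finset.card_le_card this
    simp [Finset.card_univ] at hle
    omega
  obtain ⟨c, hc⟩ := hex
  simp only [Finset.mem_insert, Finset.mem_singleton, not_or] at hc
  obtain ⟨hc0, hca, hca'⟩ := hc
  show Homotopic (hammingGraph d q) [0, fu i a, fu i b, 0] [0, fu i a', fu i b', 0]
  have h1 : Homotopic (hammingGraph d q) [0, fu i a, fu i b, 0] [0, fu i a, fu i c, 0] :=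
    step2 a b c hc0 (fun h => hca h.symm)
  have h2 : Homotopic (hammingGraph d q) [0, fu i a, fu i c, 0] [0, fu i a', fu i c, 0] :=
    step1 a a' c ha'0 (fun h => hca' h.symm)
  have h3 : Homotopic (hammingGraph d q) [0, fu i a', fu i c, 0] [0, fu i a', fu i b', 0] :=
    step2 a' c b' hb'0 ha'b'
  exact Relation.EqvGen.trans _ _ _ (Relation.EqvGen.trans _ _ _ h1 h2) h3
end

section
/- In H(d,q) with q ≥ 3 and i ≠ j, ground walks in different coordinates commute up to ×-homotopy: the concatenation U_i * U_j is ×-homotopic rel endpoints to U_j * U_i. -/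
/-!
The coordinates `i` and `j` span a copy of `K_q □ K_q` in `H(d,q)`. In any box product `G □ H`,
a walk in the `G` direction slides across an edge `b ~ b'` of `H` by one spider move per step,
since each step `a ~ a₁` bounds the square `(a,b) (a₁,b) (a₁,b') (a,b')`. Sliding the triangle
`U_i` across the three edges of the triangle `U_j` turns `U_i * U_j` into `U_j * U_i`; spider moves
survive the transport to `H(d,q)` because the embedding of the plane is injective.
-/

open SimpleGraph

namespace Move

variable {V W : Type*} {G : SimpleGraph V} {l l' : List V}

theorem append_left (xs : List V) (h : Move G l l') : Move G (xs ++ l) (xs ++ l') := by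
  cases h with
  | prune ys zs u v huv => simpa using prune (xs ++ ys) zs u v huv
  | spider ys zs u v v' w hne h1 h2 => simpa using spider (xs ++ ys) zs u v v' w hne h1 h2

theorem append_right (ys : List V) (h : Move G l l') : Move G (l ++ ys) (l' ++ ys) := by
  cases h with
  | prune xs zs u v huv => simpa using prune xs (zs ++ ys) u v huv
  | spider xs zs u v v' w hne h1 h2 => simpa using spider xs (zs ++ ys) u v v' w hne h1 h2

theorem map {G' : SimpleGraph W} (f : G →g G') (hf : Function.Injective f)
    (h : Move G l l') : Move G' (l.map f) (l'.map f) := by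
  cases h with
  | prune xs ys u v huv => simpa using prune (xs.map f) (ys.map f) (f u) (f v) (f.map_adj huv)
  | spider xs ys u v v' w hne h1 h2 =>
    simpa using spider (xs.map f) (ys.map f) (f u) (f v) (f v') (f w) (hf.ne hne)
      (f.map_adj h1) (f.map_adj h2)

end Move

namespace Homotopic

variable {V W : Type*} {G : SimpleGraph V} {l l' : List V}

theorem refl (l : List V) : Homotopic G l l := Relation.EqvGen.refl l

theorem trans {l'' : List V} (h : Homotopic G l l') (h' : Homotopic G l' l'') :
    Homotopic G l l'' :=
  Relation.EqvGen.trans _ _ _ h h'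

theorem of_move {G' : SimpleGraph W} {f : List V → List W}
    (hf : ∀ l l', Move G l l' → Move G' (f l) (f l')) (h : Homotopic G l l') :
    Homotopic G' (f l) (f l') := by
  induction h with
  | rel _ _ hm => exact Relation.EqvGen.rel _ _ (hf _ _ hm)
  | refl => exact Relation.EqvGen.refl _
  | symm _ _ _ ih => exact Relation.EqvGen.symm _ _ ih
  | trans _ _ _ _ _ ih ih' => exact Relation.EqvGen.trans _ _ _ ih ih'

theorem append_left (xs : List V) (h : Homotopic G l l') : Homotopic G (xs ++ l) (xs ++ l') :=
  of_move (fun _ _ => Move.append_left xs) h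

theorem append_right (ys : List V) (h : Homotopic G l l') : Homotopic G (l ++ ys) (l' ++ ys) :=
  of_move (fun _ _ => Move.append_right ys) h

theorem map {G' : SimpleGraph W} (f : G →g G') (hf : Function.Injective f)
    (h : Homotopic G l l') : Homotopic G' (l.map f) (l'.map f) :=
  of_move (fun _ _ => Move.map f hf) h

end Homotopic

theorem wcat_map {V W : Type*} (f : V → W) (l₁ l₂ : List V) :
    (wcat l₁ l₂).map f = wcat (l₁.map f) (l₂.map f) := by
  simp [wcat, List.map_tail]

namespace SimpleGraph.Walk

variable {α β : Type*} {G : SimpleGraph α} {H : SimpleGraph β}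

theorem homotopic_boxProd_slide {a a' : α} (p : G.Walk a a') {b b' : β} (hb : H.Adj b b') :
    Homotopic (G □ H) (p.support.map (·, b) ++ [(a', b')])
      ((a, b) :: p.support.map (·, b')) := by
  induction p with
  | nil => exact Homotopic.refl _
  | @cons a a₁ a' ha p ih =>
    rw [support_cons, List.map_cons, List.map_cons, List.cons_append]
    refine (ih.append_left [(a, b)]).trans ?_
    rw [← p.cons_tail_support, List.map_cons]
    exact Relation.EqvGen.rel _ _ (by
      simpa using Move.spider [] _ (a, b) (a₁, b) (a, b') (a₁, b')
        (by simp [ha.ne']) (boxProd_adj_right.mpr hb) (boxProd_adj_left.mpr ha))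

theorem homotopic_boxProd_wcat_comm {a a' : α} (p : G.Walk a a') {b b' : β} (q : H.Walk b b') :
    Homotopic (G □ H) (wcat (p.support.map (·, b)) (q.support.map (a', ·)))
      (wcat (q.support.map (a, ·)) (p.support.map (·, b'))) := by
  induction q with
  | nil =>
    rw [← p.cons_tail_support]
    simp only [wcat, support_nil, List.map_cons, List.map_nil, List.tail_cons, List.append_nil,
      List.singleton_append]
    exact Homotopic.refl _
  | @cons b b₁ b' hb q ih =>
    have slide := (p.homotopic_boxProd_slide hb).append_right (q.support.map (a', ·)).tail
    rw [← q.cons_tail_support] at ih slide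
    simp only [wcat, support_cons, List.map_cons, List.tail_cons, List.append_assoc,
      List.cons_append] at ih slide ⊢
    rw [← q.cons_tail_support, List.map_cons]
    exact slide.trans (ih.append_left [(a, b)])

end SimpleGraph.Walk

theorem DiffAt.hammingGraph_adj {d q : ℕ} {u v : Fin d → Fin q} {k : Fin d} (h : DiffAt u v k) :
    (hammingGraph d q).Adj u v :=
  ⟨k, h.1, fun l hl => by_contra fun hlk => hl (h.2 l hlk)⟩

section CoordPlane

variable {d q : ℕ} [NeZero q] {i j : Fin d}

def coordPlane (hij : i ≠ j) :
    (⊤ □ ⊤ : SimpleGraph (Fin q × Fin q)) →g hammingGraph d q where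
  toFun x := Function.update (Function.update (0 : Fin d → Fin q) i x.1) j x.2
  map_rel' := by
    rintro ⟨s, t⟩ ⟨s', t'⟩ (⟨hs, rfl⟩ | ⟨ht, rfl⟩)
    · refine DiffAt.hammingGraph_adj (k := i) ⟨by simpa [hij] using hs, fun k hk => ?_⟩
      simp [Function.update_apply, hk]
    · refine DiffAt.hammingGraph_adj (k := j) ⟨by simpa using ht, fun k hk => ?_⟩
      simp [Function.update_apply, hk]

@[simp]
theorem coordPlane_apply_left (hij : i ≠ j) (s : Fin q) :
    coordPlane hij (s, 0) = Function.update (0 : Fin d → Fin q) i s := by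
  simp [coordPlane, Function.update_of_ne hij.symm]

@[simp]
theorem coordPlane_apply_right (hij : i ≠ j) (t : Fin q) :
    coordPlane hij (0, t) = Function.update (0 : Fin d → Fin q) j t := by
  simp [coordPlane]

theorem coordPlane_injective (hij : i ≠ j) :
    Function.Injective (coordPlane (d := d) (q := q) hij) := by
  rintro ⟨s, t⟩ ⟨s', t'⟩ h
  have hi := congrFun h i
  have hj := congrFun h j
  simp_all [coordPlane]

end CoordPlane

def triangleWalk {α : Type*} {x a b : α} (hxa : x ≠ a) (hab : a ≠ b) (hbx : b ≠ x) :
    (⊤ : SimpleGraph α).Walk x x :=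
  .cons hxa (.cons hab (.cons hbx .nil))

theorem stmt8_general (d q : ℕ) [NeZero q] (i j : Fin d) (hij : i ≠ j)
    (Ui Uj : List (Fin d → Fin q))
    (hi : IsGroundWalk d q i Ui) (hj : IsGroundWalk d q j Uj) :
    Homotopic (hammingGraph d q) (wcat Ui Uj) (wcat Uj Ui) := by
  obtain ⟨a, b, ha, hb, hab, rfl⟩ := hi
  obtain ⟨c, e, hc, he, hce, rfl⟩ := hj
  have h := ((triangleWalk ha.symm hab hb).homotopic_boxProd_wcat_comm
    (triangleWalk hc.symm hce he)).map (coordPlane hij) (coordPlane_injective hij)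
  simpa [wcat_map, triangleWalk] using h

/-- in `H(d,q)` with `q ≥ 3` and `i ≠ j`, ground walks in different
coordinates commute up to ×-homotopy. -/
theorem stmt8 (d q : ℕ) [NeZero q] (hq : 3 ≤ q) (i j : Fin d) (hij : i ≠ j)
    (Ui Uj : List (Fin d → Fin q))
    (hi : IsGroundWalk d q i Ui) (hj : IsGroundWalk d q j Uj) :
    Homotopic (hammingGraph d q) (wcat Ui Uj) (wcat Uj Ui) :=
  stmt8_general d q i j hij Ui Uj hi hj
end

section
/- The graph C with vertex set {v_i : v ∈ V(H(2,3)), i ∈ Z}, where (a,x)_i ∼ (a,y)_i for x ≠ y, (1,x)_i ∼ (a,x)_i for a ≠ 1, and (2,x)_i ∼ (0,x)_{i+1}, together with the projection ρ(v_i) = v, is a covering map onto H(2,3): ρ is surjective on vertices and induces a bijection N(ṽ) → N(ρ(ṽ)) for every vertex ṽ of C. -/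
/-- The infinite cover `C` of `H(2,3)`: vertices `v_i` for `v ∈ V(H(2,3))`,
`i ∈ ℤ`, with `(a,x)_i ∼ (a,y)_i` for `x ≠ y`, `(1,x)_i ∼ (a,x)_i` for `a ≠ 1`,
and `(2,x)_i ∼ (0,x)_{i+1}`. -/
def coverC : SimpleGraph ((Fin 2 → Fin 3) × ℤ) where
  Adj p q :=
    (p.2 = q.2 ∧ p.1 0 = q.1 0 ∧ p.1 1 ≠ q.1 1) ∨
    (p.2 = q.2 ∧ p.1 1 = q.1 1 ∧
      ((p.1 0 = 1 ∧ q.1 0 ≠ 1) ∨ (q.1 0 = 1 ∧ p.1 0 ≠ 1))) ∨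
    (p.1 1 = q.1 1 ∧
      ((p.1 0 = 2 ∧ q.1 0 = 0 ∧ q.2 = p.2 + 1) ∨ (p.1 0 = 0 ∧ q.1 0 = 2 ∧ p.2 = q.2 + 1)))
  symm := by
    constructor
    rintro p q (⟨h1, h2, h3⟩ | ⟨h1, h2, h⟩ | ⟨h1, h⟩)
    · exact Or.inl ⟨h1.symm, h2.symm, h3.symm⟩
    · exact Or.inr (Or.inl ⟨h1.symm, h2.symm, h.symm⟩)
    · rcases h with ⟨ha, hb, hc⟩ | ⟨ha, hb, hc⟩
      · exact Or.inr (Or.inr ⟨h1.symm, Or.inr ⟨hb, ha, hc⟩⟩)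
      · exact Or.inr (Or.inr ⟨h1.symm, Or.inl ⟨hb, ha, hc⟩⟩)
  loopless := by
    constructor
    rintro p (⟨-, -, h⟩ | ⟨-, -, (⟨ha, hb⟩ | ⟨ha, hb⟩)⟩ | ⟨-, (⟨ha, hb, -⟩ | ⟨ha, hb, -⟩)⟩)
    · exact h rfl
    · exact hb ha
    · exact hb ha
    · exact absurd (ha.symm.trans hb) (by decide)
    · exact absurd (ha.symm.trans hb) (by decide)

/-!
`C` is the derived graph of a voltage assignment on `H(2,3)`: an edge `u ∼ v` of the base
lifts to the edges `(u, m) ∼ (v, m + δ u v)`, with `δ = ±1` on the edges between `(2,x)` and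
`(0,x)` and `δ = 0` otherwise. In any such lift the level of a neighbour is determined by the
level of the vertex and the base edge, so `Prod.fst` maps each neighbourhood bijectively.
-/

section VoltageLift

variable {V A : Type*} {G : SimpleGraph V} {H : SimpleGraph (V × A)} {σ : V → V → A → A}

theorem adj_fst_of_adj_iff_voltage (hH : ∀ u v a b, H.Adj (u, a) (v, b) ↔ G.Adj u v ∧ b = σ u v a)
    {p q : V × A} (h : H.Adj p q) : G.Adj p.1 q.1 :=
  ((hH _ _ _ _).1 h).1

theorem bijOn_fst_neighborSet_of_adj_iff_voltage
    (hH : ∀ u v a b, H.Adj (u, a) (v, b) ↔ G.Adj u v ∧ b = σ u v a) (p : V × A) :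
    Set.BijOn Prod.fst (H.neighborSet p) (G.neighborSet p.1) := by
  refine ⟨fun q hq => adj_fst_of_adj_iff_voltage hH hq, ?_, ?_⟩
  · rintro ⟨v, a⟩ ha ⟨v', a'⟩ ha' (rfl : v = v')
    rw [(hH _ _ _ _).1 ha |>.2, (hH _ _ _ _).1 ha' |>.2]
  · intro v hv
    exact ⟨(v, σ p.1 v p.2), (hH _ _ _ _).2 ⟨hv, rfl⟩, rfl⟩

end VoltageLift

theorem hammingGraph_two_adj_iff {q : ℕ} (u v : Fin 2 → Fin q) :
    (hammingGraph 2 q).Adj u v ↔ (u 0 ≠ v 0 ∧ u 1 = v 1) ∨ (u 0 = v 0 ∧ u 1 ≠ v 1) := by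
  constructor
  · rintro ⟨i, hi, hu⟩
    fin_cases i
    · exact Or.inl ⟨hi, not_not.1 fun h => absurd (hu 1 h) (by decide)⟩
    · exact Or.inr ⟨not_not.1 fun h => absurd (hu 0 h) (by decide), hi⟩
  · rintro (⟨h0, h1⟩ | ⟨h0, h1⟩)
    · exact ⟨0, h0, fun j hj => by fin_cases j <;> simp_all⟩
    · exact ⟨1, h1, fun j hj => by fin_cases j <;> simp_all⟩

def coverShift (u v : Fin 2 → Fin 3) : ℤ :=
  if u 0 = 2 ∧ v 0 = 0 then 1 else if u 0 = 0 ∧ v 0 = 2 then -1 else 0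

theorem coverC_adj_iff (u v : Fin 2 → Fin 3) (m n : ℤ) :
    coverC.Adj (u, m) (v, n) ↔ (hammingGraph 2 3).Adj u v ∧ n = m + coverShift u v := by
  rw [hammingGraph_two_adj_iff]
  change (m = n ∧ u 0 = v 0 ∧ u 1 ≠ v 1) ∨
    (m = n ∧ u 1 = v 1 ∧ ((u 0 = 1 ∧ v 0 ≠ 1) ∨ (v 0 = 1 ∧ u 0 ≠ 1))) ∨
    (u 1 = v 1 ∧ ((u 0 = 2 ∧ v 0 = 0 ∧ n = m + 1) ∨ (u 0 = 0 ∧ v 0 = 2 ∧ m = n + 1))) ↔ _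
  unfold coverShift
  generalize u 0 = a, u 1 = b, v 0 = c, v 1 = d
  fin_cases a <;> fin_cases b <;> fin_cases c <;> fin_cases d <;> simp <;> omega

/-- the projection `ρ(v_i) = v` from `C` to `H(2,3)` is a covering
map: a graph homomorphism, surjective on vertices, inducing a bijection
`N(ṽ) → N(ρ(ṽ))` for every vertex `ṽ`. -/
theorem stmt18 :
    (∀ a b, coverC.Adj a b → (hammingGraph 2 3).Adj a.1 b.1) ∧
    Function.Surjective (Prod.fst : (Fin 2 → Fin 3) × ℤ → (Fin 2 → Fin 3)) ∧
    (∀ p : (Fin 2 → Fin 3) × ℤ,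
      Set.BijOn Prod.fst (coverC.neighborSet p) ((hammingGraph 2 3).neighborSet p.1)) :=
  ⟨fun _ _ => adj_fst_of_adj_iff_voltage coverC_adj_iff, Prod.fst_surjective,
    bijOn_fst_neighborSet_of_adj_iff_voltage coverC_adj_iff⟩
end
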